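/- arXiv:0807.0512 — 6 statements merged into one kernel-verified Lean document; each statement's English description precedes it below -/
import Mathlib

section
/- Let A be an associative algebra, l an algebra endomorphism of A, p, q positive integers, and suppose (l^p - id)^q vanishes on a linear subspace V of A. Then (l^p - id)^{2q} vanishes on the linear span of all commutators [x,y] = xy - yx with x, y in V. -/
/-- If `(l^p - id)^q` vanishes on a linear subspace `V` of an associative algebra `A`,
then `(l^p - id)^(2q)` vanishes on the span of all commutators `[x,y] = xy - yx`
with `x, y ∈ V`. -/
theorem var_pow_vanishes_on_commutators {R : Type*} [CommRing R] {A : Type*} [Ring A]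
    [Algebra R A] (l : A →ₐ[R] A) (p q : ℕ) (hp : 1 ≤ p) (hq : 1 ≤ q)
    (V : Submodule R A)
    (D : Module.End R A) (hD : D = (l ^ p).toLinearMap - LinearMap.id)
    (hV : ∀ v ∈ V, (D ^ q) v = 0) :
    ∀ z ∈ Submodule.span R {z : A | ∃ x ∈ V, ∃ y ∈ V, z = x * y - y * x},
      (D ^ (2 * q)) z = 0 := by
  have hmul : ∀ a b : A, D (a * b) = D a * b + (l ^ p) a * D b := by
    intro a b
    simp only [hD, LinearMap.sub_apply, AlgHom.toLinearMap_apply, LinearMap.id_apply,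
      map_mul]
    noncomm_ring
  have hc1 : ∀ a : A, D ((l ^ p) a) = (l ^ p) (D a) := by
    intro a
    simp only [hD, LinearMap.sub_apply, AlgHom.toLinearMap_apply, LinearMap.id_apply,
      map_sub]
  have hcomm : ∀ (k : ℕ) (a : A), (D ^ k) ((l ^ p) a) = (l ^ p) ((D ^ k) a) := by
    intro k
    induction k with
    | zero => intro a; simp
    | succ k ih =>
      intro a
      rw [pow_succ, Module.End.mul_apply, Module.End.mul_apply, hc1, ih]
  have main : ∀ n : ℕ, ∀ i j : ℕ, i + j = n + 1 → ∀ a b : A,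
      (D ^ i) a = 0 → (D ^ j) b = 0 → (D ^ n) (a * b) = 0 := by
    intro n
    induction n with
    | zero =>
      intro i j hij a b ha hb
      rcases Nat.eq_zero_or_pos i with hi | hi
      · subst hi
        simp only [pow_zero, Module.End.one_apply] at ha
        simp [ha]
      · have : j = 0 := by omega
        subst this
        simp only [pow_zero, Module.End.one_apply] at hb
        simp [hb]
    | succ n ih =>
      intro i j hij a b ha hb
      rcases Nat.eq_zero_or_pos i with hi | hi
      · subst hi
        simp only [pow_zero, Module.End.one_apply] at ha
        simp [ha]
      rcases Nat.eq_zero_or_pos j with hj | hj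
      · subst hj
        simp only [pow_zero, Module.End.one_apply] at hb
        simp [hb]
      obtain ⟨i', rfl⟩ : ∃ i', i = i' + 1 := ⟨i - 1, by omega⟩
      obtain ⟨j', rfl⟩ : ∃ j', j = j' + 1 := ⟨j - 1, by omega⟩
      rw [pow_succ, Module.End.mul_apply, hmul, map_add]
      have h1 : (D ^ n) (D a * b) = 0 := by
        apply ih i' (j' + 1) (by omega)
        · rw [← Module.End.mul_apply, ← pow_succ] at *
          exact ha
        · exact hb
      have h2 : (D ^ n) ((l ^ p) a * D b) = 0 := by
        apply ih (i' + 1) j' (by omega)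
        · rw [hcomm, ha, map_zero]
        · rw [← Module.End.mul_apply, ← pow_succ]
          exact hb
      rw [h1, h2, add_zero]
  have hle : Submodule.span R {z : A | ∃ x ∈ V, ∃ y ∈ V, z = x * y - y * x}
      ≤ LinearMap.ker (D ^ (2 * q)) := by
    rw [Submodule.span_le]
    rintro z ⟨x, hx, y, hy, rfl⟩
    have key : ∀ a b : A, a ∈ V → b ∈ V → (D ^ (2 * q)) (a * b) = 0 := by
      intro a b haV hbV
      have h2q : 2 * q = (2 * q - 1) + 1 := by omega
      rw [h2q, pow_succ', Module.End.mul_apply,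
        main (2 * q - 1) q q (by omega) a b (hV a haV) (hV b hbV), map_zero]
    simp only [SetLike.mem_coe, LinearMap.mem_ker, map_sub]
    rw [key x y hx hy, key y x hy hx, sub_zero]
  intro z hz
  exact LinearMap.mem_ker.mp (hle hz)
end

section
/- For real numbers λ₁, λ₂ > 0, a positive integer l, integers m₁, n₁, ..., m_l, n_l, and a complex number s with large enough real part, the Mellin transform of the iterated integral I(t) = ∫_{γ(t)} ω₁⋯ω_l of the monomial forms ω_i = x^{m_i - 1} y^{n_i} dx over the arc γ(t) = {x^{λ₁} y^{λ₂} = t} ∩ {0 ≤ x, y ≤ 1} (parameterized by x increasing from t^{1/λ₁} to 1, with y = (t/x^{λ₁})^{1/λ₂}) equals λ₁^{-l} · ∏_{j=0}^{l} ( s + λ₁^{-1} ∑_{i=1}^{j} m_i + λ₂^{-1} ∑_{i=j+1}^{l} n_i )^{-1}. -/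
/-!
On the arc `x ^ λ₁ y ^ λ₂ = t` the form `x ^ (mᵢ - 1) y ^ nᵢ dx` equals `t ^ (nᵢ / λ₂) x ^ dᵢ dx`
with `dᵢ = mᵢ - 1 - λ₁ nᵢ / λ₂`, so `I t = t ^ σ J (t ^ (1 / λ₁))`, where `J u` is the iterated
integral of the pure powers `x ^ dᵢ dx` from `u` to `1`. The substitution `t = u ^ λ₁` turns the
Mellin transform of `I` into that of `J` (cut off at `1`). As `J` vanishes at `1` and
`J' = -u ^ d₁ J_tail`, integration by parts gives `M J (w) = w⁻¹ M J_tail (w + d₁ + 1)`, and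
iterating this produces the product.
-/

open MeasureTheory intervalIntegral

/-- Iterated integral `∫_a^b g₁(x₁) ∫_{x₁}^b g₂(x₂) ⋯ ∫_{x_{l-1}}^b g_l(x_l) dx_l ⋯ dx₁`. -/
noncomputable def iterInt : List (ℝ → ℝ) → ℝ → ℝ → ℝ
  | [], _, _ => 1
  | g :: gs, a, b => ∫ x in a..b, g x * iterInt gs x b

open Set Filter Topology

theorem iterInt_ofFn_congr {U : Set ℝ} [hU : U.OrdConnected] {b : ℝ} (hb : b ∈ U) :
    ∀ {l : ℕ} {f g : Fin l → ℝ → ℝ}, (∀ i, EqOn (f i) (g i) U) →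
      ∀ {x : ℝ}, x ∈ U → iterInt (List.ofFn f) x b = iterInt (List.ofFn g) x b
  | 0, _, _, _, _, _ => rfl
  | _ + 1, _, _, hfg, _, hx => by
    rw [List.ofFn_succ, List.ofFn_succ]
    refine integral_congr fun y hy => ?_
    have hyU : y ∈ U := hU.uIcc_subset hx hb hy
    simp only [hfg 0 hyU, iterInt_ofFn_congr hb (fun i => hfg i.succ) hyU]

theorem iterInt_ofFn_const_mul : ∀ {l : ℕ} (c : Fin l → ℝ) (f : Fin l → ℝ → ℝ) (a b : ℝ),
    iterInt (List.ofFn fun i x => c i * f i x) a b = (∏ i, c i) * iterInt (List.ofFn f) a b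
  | 0, _, _, _, _ => by simp [iterInt]
  | _ + 1, c, f, a, b => by
    simp only [List.ofFn_succ, iterInt, Fin.prod_univ_succ,
      iterInt_ofFn_const_mul (fun i => c i.succ) (fun i => f i.succ)]
    rw [← intervalIntegral.integral_const_mul]
    congr 1 with x
    ring

noncomputable def powIterInt (l : ℕ) (d : ℕ → ℝ) (u : ℝ) : ℝ :=
  iterInt (List.ofFn fun i : Fin l => fun x => x ^ d i) u 1

theorem powIterInt_zero (d : ℕ → ℝ) (u : ℝ) : powIterInt 0 d u = 1 := rfl

theorem powIterInt_succ (l : ℕ) (d : ℕ → ℝ) (u : ℝ) :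
    powIterInt (l + 1) d u = ∫ y in u..1, y ^ d 0 * powIterInt l (fun i => d (i + 1)) y := by
  simp only [powIterInt, List.ofFn_succ, iterInt, Fin.val_zero, Fin.val_succ]

theorem iterInt_ofFn_rpow_mul_div_rpow (lam : ℝ) (l : ℕ) (p q : ℕ → ℝ) {t a : ℝ} (ht : 0 < t)
    (ha : 0 < a) :
    iterInt (List.ofFn fun i : Fin l => fun x => x ^ p i * (t / x ^ lam) ^ q i) a 1
      = t ^ (∑ i ∈ Finset.range l, q i) * powIterInt l (fun i => p i - lam * q i) a := by
  have hmonomial : ∀ i : Fin l, EqOn (fun x => x ^ p i * (t / x ^ lam) ^ q i)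
      (fun x => t ^ q i * x ^ (p i - lam * q i)) (Ioi 0) := fun i x hx => by
    simp only
    rw [Real.div_rpow ht.le (Real.rpow_nonneg (le_of_lt hx) _), ← Real.rpow_mul (le_of_lt hx),
      Real.rpow_sub hx]
    ring
  rw [iterInt_ofFn_congr (mem_Ioi.2 one_pos) hmonomial ha, iterInt_ofFn_const_mul,
    Fin.prod_univ_eq_prod_range (fun i => t ^ q i), ← Real.rpow_sum_of_pos ht]
  rfl

theorem hasDerivAt_powIterInt_succ {l : ℕ} {d : ℕ → ℝ}
    (hJ : ContinuousOn (powIterInt l fun i => d (i + 1)) (Ioi 0)) {u : ℝ} (hu : 0 < u) :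
    HasDerivAt (powIterInt (l + 1) d) (-(u ^ d 0 * powIterInt l (fun i => d (i + 1)) u)) u := by
  have hf : ContinuousOn (fun y => y ^ d 0 * powIterInt l (fun i => d (i + 1)) y) (Ioi 0) :=
    (continuousOn_id.rpow_const fun y hy => Or.inl (ne_of_gt hy)).mul hJ
  rw [funext (powIterInt_succ l d)]
  exact integral_hasDerivAt_left
    (hf.mono (ordConnected_Ioi.uIcc_subset hu (mem_Ioi.2 one_pos))).intervalIntegrable
    (hf.stronglyMeasurableAtFilter isOpen_Ioi u hu) (hf.continuousAt (isOpen_Ioi.mem_nhds hu))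

theorem continuousOn_powIterInt : ∀ (l : ℕ) (d : ℕ → ℝ), ContinuousOn (powIterInt l d) (Ioi 0)
  | 0, _ => continuousOn_const
  | l + 1, _ => fun _ hu =>
    (hasDerivAt_powIterInt_succ (continuousOn_powIterInt l _) hu).continuousAt.continuousWithinAt

theorem abs_powIterInt_le : ∀ (l : ℕ) (d : ℕ → ℝ) {x : ℝ}, 0 < x → x ≤ 1 →
    |powIterInt l d x| ≤ x ^ (-∑ i ∈ Finset.range l, |d i|)
  | 0, _, _, _, _ => by simp [powIterInt_zero]
  | l + 1, d, x, hx0, hx1 => by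
    set S := ∑ i ∈ Finset.range l, |d (i + 1)|
    have hS : 0 ≤ S := Finset.sum_nonneg fun i _ => abs_nonneg (d (i + 1))
    have hbound : ∀ y ∈ uIoc x 1,
        ‖y ^ d 0 * powIterInt l (fun i => d (i + 1)) y‖ ≤ x ^ (-(S + |d 0|)) := by
      intro y hy
      rw [uIoc_of_le hx1] at hy
      have hy0 : 0 < y := hx0.trans hy.1
      rw [norm_mul, Real.norm_eq_abs, abs_of_pos (Real.rpow_pos_of_pos hy0 _)]
      calc y ^ d 0 * |powIterInt l _ y| ≤ y ^ d 0 * y ^ (-S) :=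
            mul_le_mul_of_nonneg_left (abs_powIterInt_le l _ hy0 hy.2) (by positivity)
        _ = y ^ (d 0 - S) := by rw [← Real.rpow_add hy0, sub_eq_add_neg]
        _ ≤ y ^ (-(S + |d 0|)) :=
            Real.rpow_le_rpow_of_exponent_ge hy0 hy.2 (by linarith [neg_abs_le (d 0)])
        _ ≤ x ^ (-(S + |d 0|)) :=
            Real.rpow_le_rpow_of_nonpos hx0 hy.1.le (by linarith [abs_nonneg (d 0)])
    rw [powIterInt_succ, Finset.sum_range_succ', ← Real.norm_eq_abs]
    calc _ ≤ x ^ (-(S + |d 0|)) * |1 - x| := norm_integral_le_of_norm_le_const hbound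
      _ ≤ x ^ (-(S + |d 0|)) :=
        mul_le_of_le_one_right (by positivity) (by rw [abs_of_nonneg (by linarith)]; linarith)

theorem norm_cpow_mul_powIterInt_le (l : ℕ) (d : ℕ → ℝ) (z : ℂ) {u : ℝ} (hu0 : 0 < u)
    (hu1 : u ≤ 1) :
    ‖(u : ℂ) ^ z * powIterInt l d u‖ ≤ u ^ (z.re - ∑ i ∈ Finset.range l, |d i|) := by
  rw [norm_mul, Complex.norm_cpow_eq_rpow_re_of_pos hu0, Complex.norm_real, Real.norm_eq_abs,
    sub_eq_add_neg, Real.rpow_add hu0]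
  exact mul_le_mul_of_nonneg_left (abs_powIterInt_le l d hu0 hu1) (by positivity)

theorem integrableOn_cpow_mul_powIterInt (l : ℕ) (d : ℕ → ℝ) {w : ℂ}
    (hw : ∑ i ∈ Finset.range l, |d i| < w.re) :
    IntegrableOn (fun u : ℝ => (u : ℂ) ^ (w - 1) * powIterInt l d u) (Ioo 0 1) := by
  have hcont : ContinuousOn (fun u : ℝ => (u : ℂ) ^ (w - 1) * powIterInt l d u) (Ioi 0) :=
    fun u hu => ((Complex.continuousAt_ofReal_cpow_const u _ (Or.inr (ne_of_gt hu))).mul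
      (Complex.continuous_ofReal.continuousAt.comp ((continuousOn_powIterInt l d).continuousAt
        (isOpen_Ioi.mem_nhds hu)))).continuousWithinAt
  have hdom : IntegrableOn (fun u : ℝ => u ^ ((w - 1).re - ∑ i ∈ Finset.range l, |d i|))
      (Ioo 0 1) :=
    ((intervalIntegrable_rpow' (by simp; linarith)).1).mono_set Ioo_subset_Ioc_self
  refine hdom.mono' ((hcont.mono fun u hu => hu.1).aestronglyMeasurable measurableSet_Ioo) ?_
  exact ae_restrict_of_forall_mem measurableSet_Ioo fun u hu =>
    norm_cpow_mul_powIterInt_le l d _ hu.1 hu.2.le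

theorem tendsto_cpow_mul_powIterInt_nhdsGT_zero (l : ℕ) (d : ℕ → ℝ) {w : ℂ}
    (hw : ∑ i ∈ Finset.range l, |d i| < w.re) :
    Tendsto (fun u : ℝ => (u : ℂ) ^ w * powIterInt l d u) (𝓝[>] 0) (𝓝 0) := by
  have hpow :
      Tendsto (fun u : ℝ => u ^ (w.re - ∑ i ∈ Finset.range l, |d i|)) (𝓝[>] 0) (𝓝 0) := by
    have := (Real.continuousAt_rpow_const 0 _ (Or.inr (sub_pos.2 hw).le)).tendsto
    rw [Real.zero_rpow (sub_pos.2 hw).ne'] at this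
    exact this.mono_left nhdsWithin_le_nhds
  refine squeeze_zero_norm' ?_ hpow
  filter_upwards [Ioc_mem_nhdsGT zero_lt_one] with u hu
  exact norm_cpow_mul_powIterInt_le l d w hu.1 hu.2

theorem mellin_indicator_Ioc (f : ℝ → ℂ) (s : ℂ) :
    mellin ((Ioc 0 1).indicator f) s = ∫ t in Ioo (0 : ℝ) 1, (t : ℂ) ^ (s - 1) * f t := by
  rw [mellin, ← integral_Ioc_eq_integral_Ioo]
  simp_rw [← indicator_smul, smul_eq_mul]
  rw [setIntegral_indicator measurableSet_Ioc, inter_eq_right.2 Ioc_subset_Ioi_self]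

theorem mellin_indicator_Ioc_comp_rpow (f : ℝ → ℂ) (s : ℂ) {a : ℝ} (ha : 0 < a) :
    mellin ((Ioc 0 1).indicator fun t => f (t ^ (1 / a))) s
      = a * mellin ((Ioc 0 1).indicator f) (a * s) := by
  have hmem : ∀ t : ℝ, 0 < t → (t ^ (1 / a) ∈ Ioc 0 1 ↔ t ∈ Ioc 0 1) := fun t ht => by
    simp [ht, Real.rpow_pos_of_pos ht, Real.rpow_le_one_iff_of_pos ht, ha, ha.le]
  have hcomp : EqOn ((Ioc 0 1).indicator fun t => f (t ^ (1 / a)))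
      (fun t => (Ioc 0 1).indicator f (t ^ (1 / a))) (Ioi 0) := fun t ht => by
    simp only [indicator, hmem t ht]
  rw [mellin, setIntegral_congr_fun measurableSet_Ioi fun t ht => by rw [hcomp ht], ← mellin,
    mellin_comp_rpow]
  simp [abs_of_pos ha, div_eq_mul_inv, mul_comm s]

theorem sum_abs_tail_lt_re_add {l : ℕ} {d : ℕ → ℝ} {w : ℂ}
    (hw : ∑ i ∈ Finset.range (l + 1), |d i| < w.re) :
    ∑ i ∈ Finset.range l, |d (i + 1)| < (w + d 0 + 1).re := by
  rw [Finset.sum_range_succ'] at hw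
  simp only [Complex.add_re, Complex.ofReal_re, Complex.one_re]
  linarith [neg_abs_le (d 0)]

theorem mellin_indicator_powIterInt_succ (l : ℕ) (d : ℕ → ℝ) {w : ℂ}
    (hw : ∑ i ∈ Finset.range (l + 1), |d i| < w.re) :
    mellin ((Ioc 0 1).indicator fun u => (powIterInt (l + 1) d u : ℂ)) w
      = w⁻¹ * mellin ((Ioc 0 1).indicator fun u => (powIterInt l (fun i => d (i + 1)) u : ℂ))
          (w + d 0 + 1) := by
  set J := powIterInt (l + 1) d
  set J' := powIterInt l fun i => d (i + 1)
  have hw0 : w ≠ 0 := by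
    rintro rfl
    rw [Complex.zero_re] at hw
    exact hw.not_ge (Finset.sum_nonneg fun i _ => abs_nonneg (d i))
  set G : ℝ → ℂ := fun u => (u : ℂ) ^ (w - 1) * J u
  set G' : ℝ → ℂ := fun u => (u : ℂ) ^ (w + d 0 + 1 - 1) * J' u
  -- `w⁻¹ u ^ w J(u)` is a primitive of `G - w⁻¹ G'` vanishing at both ends
  set Φ : ℝ → ℂ := fun u => w⁻¹ * ((u : ℂ) ^ w * J u)
  have hΦ : ∀ u ∈ Ioi (0 : ℝ), HasDerivAt Φ (G u - w⁻¹ * G' u) u := by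
    intro u hu
    have hJ := (hasDerivAt_powIterInt_succ (d := d) (continuousOn_powIterInt l _) hu).ofReal_comp
    refine (((hasDerivAt_ofReal_cpow_const (ne_of_gt hu) hw0).mul hJ).const_mul
      w⁻¹).congr_deriv ?_
    simp only [G, G', J, J', add_sub_cancel_right, Complex.ofReal_neg, Complex.ofReal_mul,
      Complex.ofReal_cpow (le_of_lt hu),
      Complex.cpow_add _ _ (Complex.ofReal_ne_zero.2 (ne_of_gt hu))]
    field_simp
    ring
  have hG := integrableOn_cpow_mul_powIterInt (l + 1) d hw
  have hG' := integrableOn_cpow_mul_powIterInt l _ (sum_abs_tail_lt_re_add hw)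
  have hΦ0 : Tendsto Φ (𝓝[>] 0) (𝓝 0) := by
    simpa using (tendsto_cpow_mul_powIterInt_nhdsGT_zero (l + 1) d hw).const_mul w⁻¹
  have hΦ1 : Tendsto Φ (𝓝[<] 1) (𝓝 0) := by
    have hJ1 : J 1 = 0 := by simp [J, powIterInt_succ]
    simpa [Φ, hJ1] using ((hΦ 1 (mem_Ioi.2 one_pos)).continuousAt.tendsto).mono_left
      nhdsWithin_le_nhds
  have hFTC := integral_eq_sub_of_hasDerivAt_of_tendsto zero_lt_one (fun u hu => hΦ u hu.1)
    ((intervalIntegrable_iff_integrableOn_Ioo_of_le zero_le_one).2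
      (hG.sub (hG'.const_mul w⁻¹))) hΦ0 hΦ1
  rw [integral_of_le zero_le_one, integral_Ioc_eq_integral_Ioo,
    integral_sub hG (hG'.const_mul w⁻¹), MeasureTheory.integral_const_mul, sub_zero] at hFTC
  rw [mellin_indicator_Ioc, mellin_indicator_Ioc]
  linear_combination hFTC

theorem mellin_indicator_powIterInt : ∀ (l : ℕ) (d : ℕ → ℝ) {w : ℂ},
    ∑ i ∈ Finset.range l, |d i| < w.re →
    mellin ((Ioc 0 1).indicator fun u => (powIterInt l d u : ℂ)) w
      = ∏ j ∈ Finset.range (l + 1), (w + ∑ i ∈ Finset.range j, ((d i : ℂ) + 1))⁻¹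
  | 0, d, w, hw => by
    simp only [powIterInt_zero, Complex.ofReal_one, zero_add, Finset.prod_range_one,
      Finset.range_zero, Finset.sum_empty, add_zero]
    rw [(hasMellin_one_Ioc (by simpa using hw)).2, one_div]
  | l + 1, d, w, hw => by
    rw [mellin_indicator_powIterInt_succ l d hw,
      mellin_indicator_powIterInt l _ (sum_abs_tail_lt_re_add hw),
      Finset.prod_range_succ' _ (l + 1), mul_comm]
    congr 1
    · refine Finset.prod_congr rfl fun j _ => ?_
      rw [Finset.sum_range_succ']
      ring
    · simp

theorem arc_exponent_identity (lam1 lam2 : ℝ) (h1 : lam1 ≠ 0) (m n : ℕ → ℤ) {j l : ℕ}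
    (hj : j ≤ l) :
    lam1 * ∑ i ∈ Finset.range l, (n i : ℝ) / lam2
        + ∑ i ∈ Finset.range j, ((m i : ℝ) - 1 - lam1 * ((n i : ℝ) / lam2) + 1)
      = lam1 * (lam1⁻¹ * ∑ i ∈ Finset.range j, (m i : ℝ)
          + lam2⁻¹ * ∑ i ∈ Finset.Ico j l, (n i : ℝ)) := by
  have hterm : ∑ i ∈ Finset.range j, ((m i : ℝ) - 1 - lam1 * ((n i : ℝ) / lam2) + 1)
      = ∑ i ∈ Finset.range j, (m i : ℝ) - lam1 * ∑ i ∈ Finset.range j, (n i : ℝ) / lam2 := by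
    rw [Finset.mul_sum, ← Finset.sum_sub_distrib]
    exact Finset.sum_congr rfl fun i _ => by ring
  rw [hterm, ← Finset.sum_range_add_sum_Ico _ hj, ← Finset.sum_div (Finset.Ico j l)]
  linear_combination (-∑ i ∈ Finset.range j, (m i : ℝ)) * mul_inv_cancel₀ h1

theorem mul_prod_inv_const_mul {K : Type*} [Field K] {a : K} (ha : a ≠ 0) (l : ℕ) (z : ℕ → K) :
    a * ∏ j ∈ Finset.range (l + 1), (a * z j)⁻¹
      = a⁻¹ ^ l * ∏ j ∈ Finset.range (l + 1), (z j)⁻¹ := by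
  simp only [mul_inv, Finset.prod_mul_distrib, Finset.prod_const, Finset.card_range, pow_succ]
  field_simp

theorem mellin_elementary_iterated_integral_general (lam1 lam2 : ℝ) (h1 : 0 < lam1)
    (l : ℕ) (m n : ℕ → ℤ) (I : ℝ → ℝ)
    (hI : ∀ t ∈ Set.Ioo (0:ℝ) 1, I t =
      iterInt
        (List.ofFn fun i : Fin l => fun x : ℝ =>
          x ^ ((m i : ℝ) - 1) * (t / x ^ lam1) ^ ((n i : ℝ) / lam2))
        (t ^ (1 / lam1)) 1) :
    ∃ R : ℝ, ∀ s : ℂ, R < s.re →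
      ∫ t in Set.Ioo (0:ℝ) 1, (t : ℂ) ^ (s - 1) * (I t : ℂ)
        = ((lam1 : ℂ))⁻¹ ^ l *
            ∏ j ∈ Finset.range (l + 1),
              (s + ((lam1⁻¹ * ∑ i ∈ Finset.range j, (m i : ℝ)
                + lam2⁻¹ * ∑ i ∈ Finset.Ico j l, (n i : ℝ) : ℝ) : ℂ))⁻¹ := by
  set σ := ∑ i ∈ Finset.range l, (n i : ℝ) / lam2
  set d : ℕ → ℝ := fun i => (m i : ℝ) - 1 - lam1 * ((n i : ℝ) / lam2)
  have hI' : ∀ t ∈ Ioo (0 : ℝ) 1,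
      (I t : ℂ) = (t : ℂ) ^ (σ : ℂ) • (powIterInt l d (t ^ (1 / lam1)) : ℂ) := fun t ht => by
    have hfactor := iterInt_ofFn_rpow_mul_div_rpow lam1 l (fun i => (m i : ℝ) - 1)
      (fun i => (n i : ℝ) / lam2) ht.1 (Real.rpow_pos_of_pos ht.1 (1 / lam1))
    beta_reduce at hfactor
    rw [hI t ht, hfactor, Complex.ofReal_mul, Complex.ofReal_cpow ht.1.le, smul_eq_mul]
  refine ⟨(∑ i ∈ Finset.range l, |d i|) / lam1 - σ, fun s hs => ?_⟩
  have hw : ∑ i ∈ Finset.range l, |d i| < ((lam1 : ℂ) * (s + σ)).re := by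
    simp only [Complex.mul_re, Complex.ofReal_re, Complex.ofReal_im, Complex.add_re, zero_mul,
      sub_zero]
    rwa [sub_lt_iff_lt_add, div_lt_iff₀ h1, mul_comm] at hs
  calc ∫ t in Ioo (0 : ℝ) 1, (t : ℂ) ^ (s - 1) * (I t : ℂ)
      = mellin ((Ioc 0 1).indicator fun t =>
          (t : ℂ) ^ (σ : ℂ) • (powIterInt l d (t ^ (1 / lam1)) : ℂ)) s := by
        rw [mellin_indicator_Ioc]
        exact setIntegral_congr_fun measurableSet_Ioo fun t ht => by rw [hI' t ht]
    _ = lam1 * mellin ((Ioc 0 1).indicator fun u => (powIterInt l d u : ℂ)) (lam1 * (s + σ)) := by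
        rw [indicator_smul, mellin_cpow_smul,
          mellin_indicator_Ioc_comp_rpow (fun u => (powIterInt l d u : ℂ)) _ h1]
    _ = lam1 * ∏ j ∈ Finset.range (l + 1),
          (lam1 * (s + σ) + ∑ i ∈ Finset.range j, ((d i : ℂ) + 1))⁻¹ := by
        rw [mellin_indicator_powIterInt l d hw]
    _ = _ := by
        rw [← mul_prod_inv_const_mul (Complex.ofReal_ne_zero.2 h1.ne')]
        refine congrArg _ (Finset.prod_congr rfl fun j hj => congrArg _ ?_)
        have := congrArg Complex.ofReal
          (arc_exponent_identity lam1 lam2 h1.ne' m n (Finset.mem_range_succ_iff.1 hj))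
        simp only [d, σ]
        push_cast at this ⊢
        linear_combination this

/-- The Mellin transform of the elementary iterated integral of the monomial forms
`ωᵢ = x^{mᵢ−1} y^{nᵢ} dx` over `γ(t) = {x^{λ₁} y^{λ₂} = t} ∩ {0 ≤ x, y ≤ 1}`
equals `λ₁^{-l} ∏_{j=0}^{l} (s + λ₁⁻¹ ∑_{i≤j} mᵢ + λ₂⁻¹ ∑_{i>j} nᵢ)⁻¹` for `s`
of sufficiently large real part. -/
theorem mellin_elementary_iterated_integral (lam1 lam2 : ℝ) (h1 : 0 < lam1) (h2 : 0 < lam2)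
    (l : ℕ) (hl : 0 < l) (m n : ℕ → ℤ) (I : ℝ → ℝ)
    (hI : ∀ t ∈ Set.Ioo (0:ℝ) 1, I t =
      iterInt
        (List.ofFn fun i : Fin l => fun x : ℝ =>
          x ^ ((m i : ℝ) - 1) * (t / x ^ lam1) ^ ((n i : ℝ) / lam2))
        (t ^ (1 / lam1)) 1) :
    ∃ R : ℝ, ∀ s : ℂ, R < s.re →
      ∫ t in Set.Ioo (0:ℝ) 1, (t : ℂ) ^ (s - 1) * (I t : ℂ)
        = ((lam1 : ℂ))⁻¹ ^ l *
            ∏ j ∈ Finset.range (l + 1),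
              (s + ((lam1⁻¹ * ∑ i ∈ Finset.range j, (m i : ℝ)
                + lam2⁻¹ * ∑ i ∈ Finset.Ico j l, (n i : ℝ) : ℝ) : ℂ))⁻¹ :=
  mellin_elementary_iterated_integral_general lam1 lam2 h1 l m n I hI
end

section
/- Let Δ = {0 ≤ u₁ ≤ ⋯ ≤ u_k ≤ 1} ⊂ ℝ^k be the standard ordered simplex, let 0 < v < 1, and let g₁, ..., g_k be integrable functions on [0,1]. Then ∫_Δ g₁(u₁)⋯g_k(u_k) du = ∑_{j=0}^{k} ( ∫_{Δ_j'} g₁(u₁)⋯g_j(u_j) du ) · ( ∫_{Δ_j''} g_{j+1}(u_{j+1})⋯g_k(u_k) du ), where Δ_j' = {0 ≤ u₁ ≤ ⋯ ≤ u_j ≤ v} and Δ_j'' = {v ≤ u_{j+1} ≤ ⋯ ≤ u_k ≤ 1}. -/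
open MeasureTheory

def orderedSimplex (a b : ℝ) (k : ℕ) : Set (Fin k → ℝ) :=
  {u | Monotone u ∧ ∀ i, a ≤ u i ∧ u i ≤ b}

/-!
Off the null set where some coordinate equals `v`, the coordinates `≤ v` of a point of the
simplex are exactly its first `j` ones, for a unique `0 ≤ j ≤ k`. Cutting a point into its first
`j` and its last `k - j` coordinates is volume preserving, and it identifies the points with a
given `j` with `{0 ≤ u₁ ≤ ⋯ ≤ u_j ≤ v} × {v ≤ u_{j+1} ≤ ⋯ ≤ u_k ≤ 1}`, on which Fubini factors
the integral of `g₁(u₁)⋯g_k(u_k)`.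
-/

open scoped Finset

theorem Fin.monotone_append_iff {α : Type*} [Preorder α] {m n : ℕ} {x : Fin m → α}
    {y : Fin n → α} :
    Monotone (Fin.append x y) ↔ Monotone x ∧ Monotone y ∧ ∀ i j, x i ≤ y j := by
  refine ⟨fun h => ⟨?_, ?_, fun i j => ?_⟩, ?_⟩
  · simpa [Function.comp_def] using h.comp (Fin.strictMono_castAdd n).monotone
  · simpa [Function.comp_def] using h.comp (Fin.strictMono_natAdd m).monotone
  · have hij : Fin.castAdd n i ≤ Fin.natAdd m j := by
      rw [Fin.le_iff_val_le_val, Fin.val_castAdd, Fin.val_natAdd]; omega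
    simpa using h hij
  · rintro ⟨hx, hy, hxy⟩ p q hpq
    induction p using Fin.addCases <;> induction q using Fin.addCases <;>
      simp only [Fin.append_left, Fin.append_right]
    · exact hx ((Fin.strictMono_castAdd n).le_iff_le.1 hpq)
    · exact hxy _ _
    · rw [Fin.le_iff_val_le_val, Fin.val_castAdd, Fin.val_natAdd] at hpq; omega
    · exact hy ((Fin.natAdd_le_natAdd_iff m).1 hpq)

theorem Monotone.le_iff_lt_card_filter {α : Type*} [LinearOrder α] {k : ℕ} {u : Fin k → α}
    (hu : Monotone u) (v : α) (i : Fin k) : u i ≤ v ↔ (i : ℕ) < #{l | u l ≤ v} := by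
  constructor
  · intro hi
    calc (i : ℕ) < #(Finset.Iic i) := by simp
      _ ≤ #{l | u l ≤ v} := Finset.card_le_card fun l hl => by
        simp only [Finset.mem_Iic, Finset.mem_filter, Finset.mem_univ, true_and] at hl ⊢
        exact (hu hl).trans hi
  · intro hi
    by_contra! hvi
    have : #{l | u l ≤ v} ≤ #(Finset.Iio i) := Finset.card_le_card fun l hl => by
      simp only [Finset.mem_Iio, Finset.mem_filter, Finset.mem_univ, true_and] at hl ⊢
      by_contra! hil
      exact (hvi.trans_le (hu hil)).not_ge hl
    rw [Fin.card_Iio] at this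
    omega

namespace MeasurableEquiv

def finAppend (α : Type*) [MeasurableSpace α] (m n : ℕ) :
    ((Fin m → α) × (Fin n → α)) ≃ᵐ (Fin (m + n) → α) :=
  (sumPiEquivProdPi fun _ : Fin m ⊕ Fin n => α).symm.trans
    (piCongrLeft (fun _ => α) finSumFinEquiv)

@[simp] theorem finAppend_apply {α : Type*} [MeasurableSpace α] {m n : ℕ}
    (p : (Fin m → α) × (Fin n → α)) : finAppend α m n p = Fin.append p.1 p.2 := by
  funext i
  refine Fin.addCases (fun i => ?_) (fun i => ?_) i
  · rw [Fin.append_left]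
    exact Equiv.piCongrLeft_sumInl (fun _ => α) finSumFinEquiv p.1 p.2 i
  · rw [Fin.append_right]
    exact Equiv.piCongrLeft_sumInr (fun _ => α) finSumFinEquiv p.1 p.2 i

theorem volume_measurePreserving_finAppend (α : Type*) [MeasureSpace α]
    [SigmaFinite (volume : Measure α)] (m n : ℕ) :
    MeasurePreserving (finAppend α m n) volume volume :=
  (volume_measurePreserving_piCongrLeft (fun _ => α) finSumFinEquiv).comp
    (volume_measurePreserving_sumPiEquivProdPi_symm fun _ => α)

end MeasurableEquiv

theorem setIntegral_image_finAppend_prod {α 𝕜 : Type*} [MeasureSpace α]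
    [SigmaFinite (volume : Measure α)] [RCLike 𝕜] {m n : ℕ} (g : ℕ → α → 𝕜)
    (A : Set (Fin m → α)) (B : Set (Fin n → α)) :
    ∫ u in MeasurableEquiv.finAppend α m n '' A ×ˢ B, ∏ i : Fin (m + n), g i (u i)
      = (∫ x in A, ∏ i : Fin m, g i (x i)) * ∫ y in B, ∏ i : Fin n, g (m + i) (y i) := by
  rw [(MeasurableEquiv.volume_measurePreserving_finAppend α m n).setIntegral_image_emb
    (MeasurableEquiv.measurableEmbedding _), Measure.volume_eq_prod, ← setIntegral_prod_mul]
  simp [Fin.prod_univ_add]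

theorem integrableOn_univ_pi_fintype_prod {ι E 𝕜 : Type*} [Fintype ι] [NormedCommRing 𝕜]
    [MeasurableSpace E] {μ : ι → Measure E} [∀ i, SigmaFinite (μ i)] {f : ι → E → 𝕜}
    {s : ι → Set E} (hf : ∀ i, IntegrableOn (f i) (s i) (μ i)) :
    IntegrableOn (fun x : ι → E => ∏ i, f i (x i)) (Set.univ.pi s) (Measure.pi μ) := by
  rw [IntegrableOn, Measure.restrict_pi_pi]
  exact .fintype_prod hf

theorem measurableSet_orderedSimplex (a b : ℝ) (k : ℕ) :
    MeasurableSet (orderedSimplex a b k) := by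
  unfold orderedSimplex Monotone
  measurability

theorem orderedSimplex_subset_pi_Icc (a b : ℝ) (k : ℕ) :
    orderedSimplex a b k ⊆ Set.univ.pi fun _ => Set.Icc a b :=
  fun _ hu i _ => hu.2 i

theorem integrableOn_orderedSimplex_prod {a b : ℝ} {k : ℕ} {g : ℕ → ℝ → ℝ}
    (hg : ∀ i < k, IntegrableOn (g i) (Set.Icc a b)) :
    IntegrableOn (fun u => ∏ i : Fin k, g i (u i)) (orderedSimplex a b k) :=
  (integrableOn_univ_pi_fintype_prod fun i : Fin k => hg i i.isLt).mono_set
    (orderedSimplex_subset_pi_Icc a b k)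

def crossesAfter (v : ℝ) (k j : ℕ) : Set (Fin k → ℝ) :=
  {u | ∀ i : Fin k, u i ≤ v ↔ (i : ℕ) < j}

theorem measurableSet_crossesAfter (v : ℝ) (k j : ℕ) : MeasurableSet (crossesAfter v k j) := by
  unfold crossesAfter
  measurability

theorem pairwiseDisjoint_crossesAfter (v : ℝ) (k : ℕ) :
    (↑(Finset.range (k + 1)) : Set ℕ).PairwiseDisjoint (crossesAfter v k) := by
  intro j hj j' hj' hne
  rw [Function.onFun, Set.disjoint_left]
  intro u hu hu'
  have hjj' : ∀ i : Fin k, (i : ℕ) < j ↔ (i : ℕ) < j' := fun i => (hu i).symm.trans (hu' i)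
  simp only [Finset.coe_range, Set.mem_Iio] at hj hj'
  rcases Nat.lt_or_gt_of_ne hne with h | h
  · simpa [h] using hjj' ⟨j, by omega⟩
  · simpa [h] using hjj' ⟨j', by omega⟩

theorem orderedSimplex_eq_biUnion_inter_crossesAfter (a b v : ℝ) (k : ℕ) :
    orderedSimplex a b k =
      ⋃ j ∈ Finset.range (k + 1), orderedSimplex a b k ∩ crossesAfter v k j := by
  ext u
  simp only [Set.mem_iUnion, Set.mem_inter_iff, Finset.mem_range, exists_prop]
  refine ⟨fun hu => ⟨#{l | u l ≤ v}, ?_, hu, hu.1.le_iff_lt_card_filter v⟩,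
    fun ⟨_, _, hu, _⟩ => hu⟩
  exact Nat.lt_succ_of_le ((Finset.card_le_univ _).trans_eq (Fintype.card_fin k))

theorem append_mem_orderedSimplex_inter_crossesAfter_iff {a b v : ℝ} {m n : ℕ} (hav : a ≤ v)
    (hvb : v ≤ b) {x : Fin m → ℝ} {y : Fin n → ℝ} (hy : ∀ i, y i ≠ v) :
    Fin.append x y ∈ orderedSimplex a b (m + n) ∩ crossesAfter v (m + n) m ↔
      x ∈ orderedSimplex a v m ∧ y ∈ orderedSimplex v b n := by
  simp only [orderedSimplex, crossesAfter, Set.mem_inter_iff, Set.mem_ofPred_eq,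
    Fin.monotone_append_iff, Fin.forall_fin_add, Fin.append_left, Fin.append_right,
    Fin.val_castAdd, Fin.val_natAdd, Fin.is_lt, iff_true, add_lt_iff_neg_left,
    Nat.not_lt_zero, iff_false, not_le]
  constructor
  · rintro ⟨⟨⟨x_mono, y_mono, -⟩, x_mem, y_mem⟩, x_le, y_gt⟩
    exact ⟨⟨x_mono, fun i => ⟨(x_mem i).1, x_le i⟩⟩,
      y_mono, fun j => ⟨(y_gt j).le, (y_mem j).2⟩⟩
  · rintro ⟨⟨x_mono, x_mem⟩, y_mono, y_mem⟩
    refine ⟨⟨⟨x_mono, y_mono, fun i j => (x_mem i).2.trans (y_mem j).1⟩,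
      fun i => ⟨(x_mem i).1, (x_mem i).2.trans hvb⟩,
      fun j => ⟨hav.trans (y_mem j).1, (y_mem j).2⟩⟩,
      fun i => (x_mem i).2, fun j => (y_mem j).1.lt_of_ne (hy j).symm⟩

theorem orderedSimplex_inter_crossesAfter_ae_eq_image {a b v : ℝ} (hav : a ≤ v) (hvb : v ≤ b)
    (m n : ℕ) :
    (orderedSimplex a b (m + n) ∩ crossesAfter v (m + n) m : Set (Fin (m + n) → ℝ))
      =ᵐ[volume]
      MeasurableEquiv.finAppend ℝ m n '' orderedSimplex a v m ×ˢ orderedSimplex v b n := by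
  refine Filter.eventuallyEq_set.2 ?_
  filter_upwards [ae_all_iff.2 fun i => Measure.ae_eval_ne _ i v] with u hu
  obtain ⟨x, y, rfl⟩ : ∃ x y, Fin.append x y = u := ⟨_, _, Fin.append_castAdd_natAdd⟩
  have happend : Fin.append x y = MeasurableEquiv.finAppend ℝ m n (x, y) :=
    (MeasurableEquiv.finAppend_apply (x, y)).symm
  rw [happend, (MeasurableEquiv.injective _).mem_set_image, Set.mem_prod, ← happend]
  exact append_mem_orderedSimplex_inter_crossesAfter_iff hav hvb fun i => by
    simpa using hu (Fin.natAdd m i)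

/-- Splitting of an iterated integral at an intermediate point `v`: the integral
of `g₁(u₁)⋯g_k(u_k)` over the simplex `{0 ≤ u₁ ≤ ⋯ ≤ u_k ≤ 1}` is the sum over
`j` of products of the corresponding integrals over `{0 ≤ u₁ ≤ ⋯ ≤ u_j ≤ v}` and
`{v ≤ u_{j+1} ≤ ⋯ ≤ u_k ≤ 1}`. -/
theorem simplex_integral_split (k : ℕ) (v : ℝ) (hv : 0 < v) (hv1 : v < 1)
    (g : ℕ → ℝ → ℝ) (hg : ∀ i < k, IntegrableOn (g i) (Set.Icc (0:ℝ) 1)) :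
    ∫ u in orderedSimplex 0 1 k, ∏ i : Fin k, g i (u i)
      = ∑ j ∈ Finset.range (k + 1),
          (∫ u in orderedSimplex 0 v j, ∏ i : Fin j, g i (u i)) *
          (∫ u in orderedSimplex v 1 (k - j), ∏ i : Fin (k - j), g (j + i) (u i)) := by
  rw [orderedSimplex_eq_biUnion_inter_crossesAfter 0 1 v k,
    integral_biUnion_finset _
      (fun j _ => (measurableSet_orderedSimplex 0 1 k).inter (measurableSet_crossesAfter v k j))
      ((pairwiseDisjoint_crossesAfter v k).mono fun j => Set.inter_subset_right)
      (fun j _ => (integrableOn_orderedSimplex_prod hg).mono_set Set.inter_subset_left)]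
  refine Finset.sum_congr rfl fun j hj => ?_
  obtain ⟨n, rfl⟩ := Nat.exists_eq_add_of_le (Finset.mem_range_succ_iff.1 hj)
  rw [Nat.add_sub_cancel_left, setIntegral_congr_set
    (orderedSimplex_inter_crossesAfter_ae_eq_image hv.le hv1.le j n),
    setIntegral_image_finAppend_prod]
end

section
/- For λ₁, λ₂ > 0 and a positive integer l, the number of points of the form λ₁^{-1} ∑_{i=1}^{j} m_i + λ₂^{-1} ∑_{i=j+1}^{l} n_i (with 0 ≤ j ≤ l, and m_i, n_i integers greater than −M) lying in an interval [p, p+1] is O(p^{l-1}) as p → ∞; more precisely, there exists a constant C (depending on λ₁, λ₂, l, M) such that for all p ∈ ℕ the number of such values in [p, p+1] is at most C·(p+1)^{l-1}. -/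
private lemma int_count_le (a b : ℝ) (hab : a ≤ b) :
    ((Finset.Icc ⌈a⌉ ⌊b⌋).card : ℝ) ≤ b - a + 1 := by
  rw [Int.card_Icc]
  rcases le_or_gt (⌊b⌋ + 1 - ⌈a⌉) 0 with h | h
  · rw [Int.toNat_eq_zero.2 h]; push_cast; linarith
  · have h1 : (⌊b⌋ : ℝ) ≤ b := Int.floor_le b
    have h2 : a ≤ (⌈a⌉ : ℝ) := Int.le_ceil a
    have h3 := Int.toNat_of_nonneg h.le
    have h4 : ((⌊b⌋ + 1 - ⌈a⌉).toNat : ℝ) = (⌊b⌋ : ℝ) + 1 - ⌈a⌉ := by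
      exact_mod_cast congrArg (Int.cast : ℤ → ℝ) h3
    rw [h4]; linarith

private lemma sum_lb (l M : ℕ) (hM : 0 < M) (s : Finset ℕ) (hs : s.card ≤ l)
    (m : ℕ → ℤ) (hm : ∀ i ∈ s, -(M:ℤ) < m i) :
    -((l:ℤ) * M) ≤ ∑ i ∈ s, m i := by
  have h1 : ∀ i ∈ s, (1 - (M:ℤ)) ≤ m i := fun i hi => by have := hm i hi; omega
  have h2 : (s.card : ℤ) * (1 - M) ≤ ∑ i ∈ s, m i := by
    calc (s.card : ℤ) * (1 - M) = ∑ _i ∈ s, (1 - (M:ℤ)) := by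
          rw [Finset.sum_const, nsmul_eq_mul]
      _ ≤ _ := Finset.sum_le_sum h1
  have h3 : (l:ℤ) * (1 - M) ≤ (s.card : ℤ) * (1 - M) := by
    apply mul_le_mul_of_nonpos_right ?_ (by omega)
    exact_mod_cast hs
  have hl0 : (0:ℤ) ≤ l := Int.natCast_nonneg l
  nlinarith

/-- The number of points of the form
`λ₁⁻¹ ∑_{i<j} m_i + λ₂⁻¹ ∑_{j≤i<l} n_i` (with `0 ≤ j ≤ l` and integers
`m_i, n_i > −M`) lying in `[p, p+1]` is `O(p^{l-1})`: there is a constant `C`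
with the count at most `C (p+1)^{l-1}` for every `p ∈ ℕ`. -/
theorem pole_count_bound (lam1 lam2 : ℝ) (h1 : 0 < lam1) (h2 : 0 < lam2)
    (l M : ℕ) (hl : 0 < l) (hM : 0 < M) :
    ∃ C : ℝ, 0 < C ∧ ∀ p : ℕ,
      (let S : Set ℝ := {x | x ∈ Set.Icc (p : ℝ) (p + 1) ∧
        ∃ j ≤ l, ∃ m n : ℕ → ℤ, (∀ i < l, -(M:ℤ) < m i ∧ -(M:ℤ) < n i) ∧
          x = lam1⁻¹ * ∑ i ∈ Finset.range j, (m i : ℝ)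
            + lam2⁻¹ * ∑ i ∈ Finset.Ico j l, (n i : ℝ)}
      S.Finite ∧ (S.ncard : ℝ) ≤ C * (p + 1) ^ (l - 1)) := by
  rcases Nat.lt_or_ge l 2 with hl2 | hl2
  · -- case l = 1
    have hl1 : l = 1 := by omega
    subst hl1
    refine ⟨lam1 + lam2 + 2, by positivity, fun p => ?_⟩
    intro S
    set F : Finset ℝ :=
      (Finset.Icc ⌈lam1*(p:ℝ)⌉ ⌊lam1*((p:ℝ)+1)⌋).image (fun A : ℤ => lam1⁻¹*(A:ℝ)) ∪
      (Finset.Icc ⌈lam2*(p:ℝ)⌉ ⌊lam2*((p:ℝ)+1)⌋).image (fun B : ℤ => lam2⁻¹*(B:ℝ)) with hF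
    have hsub : S ⊆ ↑F := by
      rintro x ⟨⟨hx1, hx2⟩, j, hj, m, n, hmn, hx⟩
      interval_cases j
      · -- j = 0 : x = lam2⁻¹ * n 0
        have hx' : x = lam2⁻¹ * (n 0 : ℝ) := by
          simpa using hx
        have hle : (p:ℝ) ≤ lam2⁻¹ * (n 0 : ℝ) := hx' ▸ hx1
        have hge : lam2⁻¹ * (n 0 : ℝ) ≤ (p:ℝ) + 1 := hx' ▸ hx2
        have hb1 : lam2 * (p:ℝ) ≤ (n 0 : ℝ) := by
          have h := mul_le_mul_of_nonneg_left hle h2.le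
          rwa [← mul_assoc, mul_inv_cancel₀ h2.ne', one_mul] at h
        have hb2 : (n 0 : ℝ) ≤ lam2 * ((p:ℝ) + 1) := by
          have h := mul_le_mul_of_nonneg_left hge h2.le
          rwa [← mul_assoc, mul_inv_cancel₀ h2.ne', one_mul] at h
        exact Finset.mem_coe.2 (Finset.mem_union_right _ (Finset.mem_image.2
          ⟨n 0, Finset.mem_Icc.2 ⟨Int.ceil_le.2 hb1, Int.le_floor.2 hb2⟩, hx'.symm⟩))
      · -- j = 1 : x = lam1⁻¹ * m 0
        have hx' : x = lam1⁻¹ * (m 0 : ℝ) := by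
          simpa using hx
        have hle : (p:ℝ) ≤ lam1⁻¹ * (m 0 : ℝ) := hx' ▸ hx1
        have hge : lam1⁻¹ * (m 0 : ℝ) ≤ (p:ℝ) + 1 := hx' ▸ hx2
        have hb1 : lam1 * (p:ℝ) ≤ (m 0 : ℝ) := by
          have h := mul_le_mul_of_nonneg_left hle h1.le
          rwa [← mul_assoc, mul_inv_cancel₀ h1.ne', one_mul] at h
        have hb2 : (m 0 : ℝ) ≤ lam1 * ((p:ℝ) + 1) := by
          have h := mul_le_mul_of_nonneg_left hge h1.le
          rwa [← mul_assoc, mul_inv_cancel₀ h1.ne', one_mul] at h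
        exact Finset.mem_coe.2 (Finset.mem_union_left _ (Finset.mem_image.2
          ⟨m 0, Finset.mem_Icc.2 ⟨Int.ceil_le.2 hb1, Int.le_floor.2 hb2⟩, hx'.symm⟩))
    refine ⟨Set.Finite.subset F.finite_toSet hsub, ?_⟩
    have hn : (S.ncard : ℝ) ≤ (F.card : ℝ) := by
      have h := Set.ncard_le_ncard hsub F.finite_toSet
      rw [Set.ncard_coe_finset] at h
      exact_mod_cast h
    have hc1 := int_count_le (lam1*(p:ℝ)) (lam1*((p:ℝ)+1)) (by nlinarith)
    have hc2 := int_count_le (lam2*(p:ℝ)) (lam2*((p:ℝ)+1)) (by nlinarith)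
    have hcard : (F.card : ℝ) ≤ (lam1 + 1) + (lam2 + 1) := by
      have hu := Finset.card_union_le
        ((Finset.Icc ⌈lam1*(p:ℝ)⌉ ⌊lam1*((p:ℝ)+1)⌋).image (fun A : ℤ => lam1⁻¹*(A:ℝ)))
        ((Finset.Icc ⌈lam2*(p:ℝ)⌉ ⌊lam2*((p:ℝ)+1)⌋).image (fun B : ℤ => lam2⁻¹*(B:ℝ)))
      have hi1 := Finset.card_image_le (s := Finset.Icc ⌈lam1*(p:ℝ)⌉ ⌊lam1*((p:ℝ)+1)⌋)
        (f := fun A : ℤ => lam1⁻¹*(A:ℝ))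
      have hi2 := Finset.card_image_le (s := Finset.Icc ⌈lam2*(p:ℝ)⌉ ⌊lam2*((p:ℝ)+1)⌋)
        (f := fun B : ℤ => lam2⁻¹*(B:ℝ))
      have hu' : (F.card : ℝ) ≤ ((Finset.Icc ⌈lam1*(p:ℝ)⌉ ⌊lam1*((p:ℝ)+1)⌋).card : ℝ)
          + ((Finset.Icc ⌈lam2*(p:ℝ)⌉ ⌊lam2*((p:ℝ)+1)⌋).card : ℝ) := by
        rw [hF]; exact_mod_cast le_trans hu (Nat.add_le_add hi1 hi2)
      nlinarith
    simp only [Nat.sub_self, pow_zero, mul_one]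
    linarith
  · -- case l ≥ 2
    refine ⟨(lam1 + lam1*lam2⁻¹*((l:ℝ)*M) + (l:ℝ)*M + 2) * (lam2 + 1), by positivity,
      fun p => ?_⟩
    intro S
    set K : ℝ := lam1*((p:ℝ)+1) + lam1*lam2⁻¹*((l:ℝ)*M) with hK
    set F : Finset ℝ := (Finset.Icc (-((l:ℤ)*M)) ⌊K⌋).biUnion (fun A =>
      (Finset.Icc ⌈lam2*((p:ℝ) - lam1⁻¹*(A:ℝ))⌉ ⌊lam2*(((p:ℝ)+1) - lam1⁻¹*(A:ℝ))⌋).image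
        (fun B : ℤ => lam1⁻¹*(A:ℝ) + lam2⁻¹*(B:ℝ))) with hF
    have hsub : S ⊆ ↑F := by
      rintro x ⟨⟨hx1, hx2⟩, j, hj, m, n, hmn, hx⟩
      set A : ℤ := ∑ i ∈ Finset.range j, m i with hA
      set B : ℤ := ∑ i ∈ Finset.Ico j l, n i with hB
      have hxAB : x = lam1⁻¹*(A:ℝ) + lam2⁻¹*(B:ℝ) := by
        rw [hx, hA, hB]; push_cast; ring
      have hA_lb : -((l:ℤ)*M) ≤ A :=
        sum_lb l M hM _ (by simpa using hj) m
          (fun i hi => (hmn i (lt_of_lt_of_le (Finset.mem_range.mp hi) hj)).1)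
      have hB_lb : -((l:ℤ)*M) ≤ B :=
        sum_lb l M hM _ (by rw [Nat.card_Ico]; omega) n
          (fun i hi => (hmn i (Finset.mem_Ico.mp hi).2).2)
      have hB0 : -((l:ℝ)*(M:ℝ)) ≤ (B:ℝ) := by exact_mod_cast hB_lb
      have h2i : (0:ℝ) < lam2⁻¹ := inv_pos.mpr h2
      have hx2' : lam1⁻¹*(A:ℝ) + lam2⁻¹*(B:ℝ) ≤ (p:ℝ)+1 := hxAB ▸ hx2
      have hx1' : (p:ℝ) ≤ lam1⁻¹*(A:ℝ) + lam2⁻¹*(B:ℝ) := hxAB ▸ hx1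
      have hBmul : -(lam2⁻¹*((l:ℝ)*M)) ≤ lam2⁻¹*(B:ℝ) := by
        have h := mul_le_mul_of_nonneg_left hB0 h2i.le
        rwa [mul_neg] at h
      have key1 : lam1⁻¹*(A:ℝ) ≤ ((p:ℝ)+1) + lam2⁻¹*((l:ℝ)*M) := by linarith
      have hA_ub : A ≤ ⌊K⌋ := by
        apply Int.le_floor.2
        have e : (A:ℝ) = lam1*(lam1⁻¹*(A:ℝ)) := by field_simp
        calc (A:ℝ) = lam1*(lam1⁻¹*(A:ℝ)) := e
          _ ≤ lam1*(((p:ℝ)+1) + lam2⁻¹*((l:ℝ)*M)) := mul_le_mul_of_nonneg_left key1 h1.le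
          _ = K := by rw [hK]; ring
      have hxB : lam2⁻¹*(B:ℝ) = x - lam1⁻¹*(A:ℝ) := by rw [hxAB]; ring
      have hb1 : lam2*((p:ℝ) - lam1⁻¹*(A:ℝ)) ≤ (B:ℝ) := by
        have h : (p:ℝ) - lam1⁻¹*(A:ℝ) ≤ lam2⁻¹*(B:ℝ) := by linarith
        have h' := mul_le_mul_of_nonneg_left h h2.le
        rwa [← mul_assoc, mul_inv_cancel₀ h2.ne', one_mul] at h'
      have hb2 : (B:ℝ) ≤ lam2*(((p:ℝ)+1) - lam1⁻¹*(A:ℝ)) := by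
        have h : lam2⁻¹*(B:ℝ) ≤ ((p:ℝ)+1) - lam1⁻¹*(A:ℝ) := by linarith
        have h' := mul_le_mul_of_nonneg_left h h2.le
        rwa [← mul_assoc, mul_inv_cancel₀ h2.ne', one_mul] at h'
      exact Finset.mem_coe.2 (Finset.mem_biUnion.2 ⟨A, Finset.mem_Icc.2 ⟨hA_lb, hA_ub⟩,
        Finset.mem_image.2 ⟨B, Finset.mem_Icc.2 ⟨Int.ceil_le.2 hb1, Int.le_floor.2 hb2⟩,
          hxAB.symm⟩⟩)
    refine ⟨Set.Finite.subset F.finite_toSet hsub, ?_⟩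
    have hn : (S.ncard : ℝ) ≤ (F.card : ℝ) := by
      have h := Set.ncard_le_ncard hsub F.finite_toSet
      rw [Set.ncard_coe_finset] at h
      exact_mod_cast h
    have hp1 : (1:ℝ) ≤ (p:ℝ) + 1 := by have := Nat.cast_nonneg (α := ℝ) p; linarith
    have hlM0 : (0:ℝ) ≤ (l:ℝ)*M := by positivity
    -- bound on inner fibers
    have hinner : ∀ A : ℤ,
        (((Finset.Icc ⌈lam2*((p:ℝ) - lam1⁻¹*(A:ℝ))⌉
          ⌊lam2*(((p:ℝ)+1) - lam1⁻¹*(A:ℝ))⌋).image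
            (fun B : ℤ => lam1⁻¹*(A:ℝ) + lam2⁻¹*(B:ℝ))).card : ℝ) ≤ lam2 + 1 := by
      intro A
      have hle : lam2*((p:ℝ) - lam1⁻¹*(A:ℝ)) ≤ lam2*(((p:ℝ)+1) - lam1⁻¹*(A:ℝ)) := by
        nlinarith
      have hc := int_count_le _ _ hle
      have he : lam2*(((p:ℝ)+1) - lam1⁻¹*(A:ℝ)) - lam2*((p:ℝ) - lam1⁻¹*(A:ℝ)) + 1
          = lam2 + 1 := by ring
      have him := Finset.card_image_le
        (s := Finset.Icc ⌈lam2*((p:ℝ) - lam1⁻¹*(A:ℝ))⌉ ⌊lam2*(((p:ℝ)+1) - lam1⁻¹*(A:ℝ))⌋)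
        (f := fun B : ℤ => lam1⁻¹*(A:ℝ) + lam2⁻¹*(B:ℝ))
      have him' : (((Finset.Icc ⌈lam2*((p:ℝ) - lam1⁻¹*(A:ℝ))⌉
          ⌊lam2*(((p:ℝ)+1) - lam1⁻¹*(A:ℝ))⌋).image
            (fun B : ℤ => lam1⁻¹*(A:ℝ) + lam2⁻¹*(B:ℝ))).card : ℝ)
          ≤ ((Finset.Icc ⌈lam2*((p:ℝ) - lam1⁻¹*(A:ℝ))⌉
          ⌊lam2*(((p:ℝ)+1) - lam1⁻¹*(A:ℝ))⌋).card : ℝ) := by exact_mod_cast him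
      linarith
    -- bound on outer index set
    have houter : ((Finset.Icc (-((l:ℤ)*M)) ⌊K⌋).card : ℝ) ≤ K + (l:ℝ)*M + 1 := by
      have hKnn : (0:ℝ) ≤ K := by rw [hK]; positivity
      have hle : -((l:ℝ)*(M:ℝ)) ≤ K := by linarith
      have hc := int_count_le (-((l:ℝ)*(M:ℝ))) K hle
      have hcl : ⌈(-((l:ℝ)*(M:ℝ)))⌉ = -((l:ℤ)*M) := by
        rw [show (-((l:ℝ)*(M:ℝ))) = (((-((l:ℤ)*M)):ℤ):ℝ) by push_cast; ring,
          Int.ceil_intCast]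
      rw [hcl] at hc
      linarith
    have hFcard : (F.card : ℝ) ≤ (K + (l:ℝ)*M + 1) * (lam2 + 1) := by
      have hb := Finset.card_biUnion_le (s := Finset.Icc (-((l:ℤ)*M)) ⌊K⌋)
        (t := fun A : ℤ =>
          (Finset.Icc ⌈lam2*((p:ℝ) - lam1⁻¹*(A:ℝ))⌉ ⌊lam2*(((p:ℝ)+1) - lam1⁻¹*(A:ℝ))⌋).image
            (fun B : ℤ => lam1⁻¹*(A:ℝ) + lam2⁻¹*(B:ℝ)))
      have hb' : (F.card : ℝ) ≤ ∑ A ∈ Finset.Icc (-((l:ℤ)*M)) ⌊K⌋,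
          (((Finset.Icc ⌈lam2*((p:ℝ) - lam1⁻¹*(A:ℝ))⌉
            ⌊lam2*(((p:ℝ)+1) - lam1⁻¹*(A:ℝ))⌋).image
              (fun B : ℤ => lam1⁻¹*(A:ℝ) + lam2⁻¹*(B:ℝ))).card : ℝ) := by
        rw [hF]; exact_mod_cast hb
      calc (F.card : ℝ) ≤ _ := hb'
        _ ≤ ∑ _A ∈ Finset.Icc (-((l:ℤ)*M)) ⌊K⌋, (lam2 + 1) :=
            Finset.sum_le_sum (fun A _ => hinner A)
        _ = ((Finset.Icc (-((l:ℤ)*M)) ⌊K⌋).card : ℝ) * (lam2 + 1) := by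
            rw [Finset.sum_const, nsmul_eq_mul]
        _ ≤ (K + (l:ℝ)*M + 1) * (lam2 + 1) := by
            apply mul_le_mul_of_nonneg_right houter (by linarith)
    have hstep : (K + (l:ℝ)*M + 1) * (lam2 + 1)
        ≤ ((lam1 + lam1*lam2⁻¹*((l:ℝ)*M) + (l:ℝ)*M + 2) * (lam2 + 1)) * (((p:ℝ)+1)) := by
      have h2i : (0:ℝ) < lam2⁻¹ := inv_pos.mpr h2
      have hterm : (0:ℝ) ≤ lam1*lam2⁻¹*((l:ℝ)*M) := by positivity
      have hKle : K + (l:ℝ)*M + 1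
          ≤ (lam1 + lam1*lam2⁻¹*((l:ℝ)*M) + (l:ℝ)*M + 2) * (((p:ℝ)+1)) := by
        rw [hK]; nlinarith
      nlinarith
    have hpow : ((p:ℝ)+1) ≤ ((p:ℝ)+1) ^ (l - 1) := le_self_pow₀ hp1 (by omega)
    have hCnn : (0:ℝ) ≤ (lam1 + lam1*lam2⁻¹*((l:ℝ)*M) + (l:ℝ)*M + 2) * (lam2 + 1) := by
      positivity
    calc (S.ncard : ℝ) ≤ (F.card : ℝ) := hn
      _ ≤ (K + (l:ℝ)*M + 1) * (lam2 + 1) := hFcard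
      _ ≤ ((lam1 + lam1*lam2⁻¹*((l:ℝ)*M) + (l:ℝ)*M + 2) * (lam2 + 1)) * (((p:ℝ)+1)) := hstep
      _ ≤ _ := mul_le_mul_of_nonneg_left hpow hCnn
end

section
/- Define f_ε(t) = ε e^{-1/t} (t sin(1/t) − ε) for t > 0 and f_ε(0) = 0. Then for each ε > 0, the equation f_ε(t) = 0 has only finitely many solutions in (0, 1], and the number of solutions in (0,1] tends to infinity as ε → 0⁺. -/
/-!
The zeros of `f_ε` in `(0, 1]` are the solutions of `t sin(1/t) = ε`, and each satisfies `ε ≤ t`.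
On `[ε, 1]` the function `t sin(1/t) - ε` is analytic and not identically zero, so it has only
finitely many zeros there. On the interval between `1/(2π(k+1) + π/2)`, where `t sin(1/t) = t`, and
`1/(2π(k+1))`, where it vanishes, the intermediate value theorem produces a solution as soon as
`ε < 1/(2π(k+1) + π/2)`; these intervals are disjoint, so for `ε < 1/(2π(N+1) + π/2)` there are
at least `N` solutions.
-/

open Filter Topology Set Real

theorem AnalyticOnNhd.finite_setOf_eq_zero_of_isCompact {𝕜 E : Type*} [NontriviallyNormedField 𝕜]
    [NormedAddCommGroup E] [NormedSpace 𝕜 E] {f : 𝕜 → E} {U K : Set 𝕜} {z₀ : 𝕜}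
    (hf : AnalyticOnNhd 𝕜 f U) (hU : IsConnected U) (hz₀ : z₀ ∈ U) (hfz₀ : f z₀ ≠ 0)
    (hK : IsCompact K) (hKU : K ⊆ U) :
    {z ∈ K | f z = 0}.Finite := by
  simpa [sdiff_eq, inter_def] using hK.finite_sdiff_of_mem_codiscreteWithin
    (codiscreteWithin_mono hKU (hf.preimage_zero_mem_codiscreteWithin hfz₀ hz₀ hU))

theorem le_ncard_of_forall_exists_mem_Ioo {α : Type*} [LinearOrder α] {S : Set α} (hS : S.Finite)
    {a b : ℕ → α} (hba : ∀ i j, i < j → b j ≤ a i) {N : ℕ}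
    (h : ∀ k < N, ∃ x ∈ S, x ∈ Ioo (a k) (b k)) : N ≤ S.ncard := by
  choose x hxS hx using h
  have : Finite S := hS
  let g : Fin N → S := fun k => ⟨x k k.2, hxS k k.2⟩
  have hg : StrictAnti g := fun i j hij =>
    calc x j j.2 < b j := (hx j j.2).2
      _ ≤ a i := hba i j hij
      _ < x i i.2 := (hx i i.2).1
  simpa [Nat.card_coe_set_eq] using Nat.card_le_card_of_injective g hg.injective

namespace MulSinInv

theorem analyticOnNhd : AnalyticOnNhd ℝ (fun t : ℝ => t * sin t⁻¹) (Ioi 0) := fun _ ht =>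
  analyticAt_id.mul (analyticAt_sin.comp (analyticAt_inv (ne_of_gt ht)))

theorem le_self_of_eq {t ε : ℝ} (ht : 0 < t) (h : t * sin t⁻¹ = ε) : ε ≤ t :=
  h ▸ mul_le_of_le_one_right ht.le (sin_le_one _)

noncomputable def peak (k : ℕ) : ℝ := (π / 2 + (k + 1) * (2 * π))⁻¹

noncomputable def node (k : ℕ) : ℝ := ((k + 1) * (2 * π))⁻¹

theorem peak_pos (k : ℕ) : 0 < peak k := by unfold peak; positivity

theorem peak_lt_node (k : ℕ) : peak k < node k :=
  inv_strictAnti₀ (by positivity) (by linarith [pi_pos])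

theorem node_lt_one (k : ℕ) : node k < 1 := by
  refine inv_lt_one_of_one_lt₀ ?_
  nlinarith [pi_gt_three, (Nat.cast_nonneg k : (0 : ℝ) ≤ k)]

theorem node_le_peak {i j : ℕ} (hij : i < j) : node j ≤ peak i := by
  have : (i : ℝ) + 1 ≤ j := by exact_mod_cast hij
  exact inv_anti₀ (by positivity) (by nlinarith [pi_pos])

theorem peak_anti : Antitone peak := fun i j hij => by
  have : (i : ℝ) ≤ j := by exact_mod_cast hij
  exact inv_anti₀ (by positivity) (by nlinarith [pi_pos])

theorem mul_sin_inv_peak (k : ℕ) : peak k * sin (peak k)⁻¹ = peak k := by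
  have := sin_add_nat_mul_two_pi (π / 2) (k + 1)
  push_cast at this
  rw [peak, inv_inv, this, sin_pi_div_two, mul_one]

theorem mul_sin_inv_node (k : ℕ) : node k * sin (node k)⁻¹ = 0 := by
  have : ((k : ℝ) + 1) * (2 * π) = (2 * (k + 1) : ℕ) * π := by push_cast; ring
  rw [node, inv_inv, this, sin_nat_mul_pi, mul_zero]

theorem exists_eq_mem_Ioo (k : ℕ) {ε : ℝ} (hε : 0 < ε) (h : ε < peak k) :
    ∃ t ∈ Ioo (peak k) (node k), t * sin t⁻¹ = ε := by
  have hcont : ContinuousOn (fun t : ℝ => t * sin t⁻¹) (Icc (peak k) (node k)) :=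
    analyticOnNhd.continuousOn.mono fun t ht => (peak_pos k).trans_le ht.1
  refine intermediate_value_Ioo' (peak_lt_node k).le hcont ?_
  rw [mem_Ioo, mul_sin_inv_peak, mul_sin_inv_node]
  exact ⟨hε, h⟩

theorem finite_setOf_eq {ε : ℝ} (hε : 0 < ε) : {t ∈ Ioc 0 1 | t * sin t⁻¹ = ε}.Finite := by
  -- the solutions lie in the compact `[ε, 1]`, away from the singularity at `0`
  have hnode : node 0 * sin (node 0)⁻¹ - ε ≠ 0 := by
    rw [mul_sin_inv_node, zero_sub]; exact neg_ne_zero.2 hε.ne'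
  have hzeros : {t ∈ Icc ε 1 | t * sin t⁻¹ - ε = 0}.Finite :=
    (analyticOnNhd.sub analyticOnNhd_const).finite_setOf_eq_zero_of_isCompact isConnected_Ioi
      ((peak_pos 0).trans (peak_lt_node 0)) hnode isCompact_Icc fun t ht => hε.trans_le ht.1
  exact hzeros.subset fun t ⟨⟨ht, ht1⟩, hεt⟩ => ⟨⟨le_self_of_eq ht hεt, ht1⟩, sub_eq_zero.2 hεt⟩

theorem le_ncard_setOf_eq (N : ℕ) {ε : ℝ} (hε : 0 < ε) (h : ε < peak N) :
    N ≤ {t ∈ Ioc 0 1 | t * sin t⁻¹ = ε}.ncard := by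
  refine le_ncard_of_forall_exists_mem_Ioo (finite_setOf_eq hε) (fun _ _ => node_le_peak) ?_
  intro k hk
  obtain ⟨t, ht, hεt⟩ := exists_eq_mem_Ioo k hε (h.trans_le (peak_anti hk.le))
  exact ⟨t, ⟨⟨(peak_pos k).trans ht.1, (ht.2.trans (node_lt_one k)).le⟩, hεt⟩, ht⟩

end MulSinInv

theorem zeros_of_f_eps_general (f : ℝ → ℝ → ℝ)
    (hf : ∀ ε t, t ≠ 0 → f ε t = ε * Real.exp (-1/t) * (t * Real.sin (1/t) - ε)) :
    (∀ ε : ℝ, 0 < ε → {t ∈ Set.Ioc (0:ℝ) 1 | f ε t = 0}.Finite) ∧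
      Tendsto (fun ε : ℝ => {t ∈ Set.Ioc (0:ℝ) 1 | f ε t = 0}.ncard)
        (𝓝[>] (0:ℝ)) atTop := by
  have hzeros : ∀ ε : ℝ, 0 < ε →
      {t ∈ Ioc (0:ℝ) 1 | f ε t = 0} = {t ∈ Ioc 0 1 | t * sin t⁻¹ = ε} := by
    intro ε hε
    ext t
    simp only [mem_ofPred_eq, and_congr_right_iff]
    intro ht
    simp [hf ε t ht.1.ne', hε.ne', exp_ne_zero, sub_eq_zero]
  refine ⟨fun ε hε => hzeros ε hε ▸ MulSinInv.finite_setOf_eq hε, tendsto_atTop.2 fun N => ?_⟩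
  filter_upwards [Ioo_mem_nhdsGT (MulSinInv.peak_pos N)] with ε ⟨hε, hεN⟩
  rw [hzeros ε hε]
  exact MulSinInv.le_ncard_setOf_eq N hε hεN

/-- For `f_ε(t) = ε e^{-1/t}(t sin(1/t) − ε)` (with `f_ε(0)=0`): for each `ε > 0`
the equation `f_ε(t) = 0` has finitely many solutions in `(0,1]`, and the number
of solutions tends to infinity as `ε → 0⁺`. -/
theorem zeros_of_f_eps (f : ℝ → ℝ → ℝ)
    (hf : ∀ ε t, t ≠ 0 → f ε t = ε * Real.exp (-1/t) * (t * Real.sin (1/t) - ε))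
    (hf0 : ∀ ε, f ε 0 = 0) :
    (∀ ε : ℝ, 0 < ε → {t ∈ Set.Ioc (0:ℝ) 1 | f ε t = 0}.Finite) ∧
      Tendsto (fun ε : ℝ => {t ∈ Set.Ioc (0:ℝ) 1 | f ε t = 0}.ncard)
        (𝓝[>] (0:ℝ)) atTop :=
  zeros_of_f_eps_general f hf
end

section
/- Let F be a group with lower central series F₁ = F, F_{i+1} = (F_i, F). Let l be an automorphism of F, let G be a normal subgroup of F invariant under l, and suppose that for each i the induced map l_* on F_i/F_{i+1} is annihilated by the polynomial p_i(z) = (z^{m_i} − 1)^{n_i}, i.e., p_i(l_*) maps F_i/F_{i+1} to the identity (in additive notation). Then the product p = ∏_{i=1}^k p_i annihilates the automorphism induced by l on G̃/(G̃, F̃), where F̃ = F/F_{k+1}, G̃ = G F_{k+1}/F_{k+1}. -/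
/-- Composite `p₁(l_*) ∘ ⋯ ∘ p_i(l_*)` at the level of representatives:
`applyOps V n i = (V 1)^[n 1] ∘ ⋯ ∘ (V i)^[n i]` (each `V i : F → F` represents
the operator `l_*^{m_i} − id` on abelianized quotients, and iterating it `n i`
times represents `p_i(l_*) = (l_*^{m_i} − id)^{n_i}`). -/
def applyOps {F : Type*} (V : ℕ → F → F) (n : ℕ → ℕ) : ℕ → F → F
  | 0 => id
  | (i + 1) => applyOps V n i ∘ (V (i + 1))^[n (i + 1)]

/-- Semiconjugation transports `applyOps`. -/
lemma applyOps_semiconj {F Q : Type*} (π : F → Q) (V : ℕ → F → F) (W : ℕ → Q → Q)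
    (n : ℕ → ℕ) (h : ∀ i g, π (V i g) = W i (π g)) :
    ∀ i g, π (applyOps V n i g) = applyOps W n i (π g) := by
  intro i
  induction i with
  | zero => intro g; rfl
  | succ i ih =>
    intro g
    have hsc : Function.Semiconj π (V (i + 1)) (W (i + 1)) := fun g' => h (i + 1) g'
    have := hsc.iterate_right (n (i + 1)) g
    simp only [applyOps, Function.comp_apply]
    rw [ih, this]

section comm

variable {Q : Type*} (W : ℕ → Q → Q) (S : Set Q)
  (hWS : ∀ a q, q ∈ S → W a q ∈ S)
  (hcomm : ∀ a b q, q ∈ S → W a (W b q) = W b (W a q))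

include hWS in
lemma iter_mem : ∀ (c a : ℕ) (q : Q), q ∈ S → (W a)^[c] q ∈ S := by
  intro c
  induction c with
  | zero => intro a q hq; exact hq
  | succ c ih =>
    intro a q hq
    rw [Function.iterate_succ_apply]
    exact ih a _ (hWS a q hq)

include hWS hcomm in
lemma iter_comm1 : ∀ (c a b : ℕ) (q : Q), q ∈ S →
    (W a)^[c] (W b q) = W b ((W a)^[c] q) := by
  intro c
  induction c with
  | zero => intro a b q _; rfl
  | succ c ih =>
    intro a b q hq
    rw [Function.iterate_succ_apply', Function.iterate_succ_apply',
      ih a b q hq, hcomm a b _ (iter_mem W S hWS c a q hq)]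

include hWS hcomm in
lemma iter_comm2 : ∀ (d c a b : ℕ) (q : Q), q ∈ S →
    (W a)^[c] ((W b)^[d] q) = (W b)^[d] ((W a)^[c] q) := by
  intro d
  induction d with
  | zero => intro c a b q _; rfl
  | succ d ih =>
    intro c a b q hq
    rw [Function.iterate_succ_apply', Function.iterate_succ_apply',
      iter_comm1 W S hWS hcomm c a b _ (iter_mem W S hWS d b q hq), ih c a b q hq]

include hWS hcomm in
lemma applyOps_comm (n : ℕ → ℕ) : ∀ (i : ℕ) (q : Q), q ∈ S → ∀ (a c : ℕ),
    applyOps W n i ((W a)^[c] q) = (W a)^[c] (applyOps W n i q) := by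
  intro i
  induction i with
  | zero => intro q _ a c; rfl
  | succ i ih =>
    intro q hq a c
    simp only [applyOps, Function.comp_apply]
    rw [iter_comm2 W S hWS hcomm c (n (i + 1)) (i + 1) a q hq,
      ih _ (iter_mem W S hWS (n (i + 1)) (i + 1) q hq) a c]

end comm

/-- elementary rearrangement using centrality of `a` and `b`. -/
lemma central_rearrange {Q : Type*} [Group Q] {a b c : Q}
    (ha : ∀ x, a * x = x * a) (hb : ∀ x, b * x = x * b) :
    a⁻¹ * (c * b⁻¹) = b⁻¹ * (c * a⁻¹) := by
  have ha' : ∀ x : Q, a⁻¹ * x = x * a⁻¹ := by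
    intro x
    calc a⁻¹ * x = a⁻¹ * (x * a) * a⁻¹ := by group
    _ = a⁻¹ * (a * x) * a⁻¹ := by rw [← ha x]
    _ = x * a⁻¹ := by group
  have hb' : ∀ x : Q, b⁻¹ * x = x * b⁻¹ := by
    intro x
    calc b⁻¹ * x = b⁻¹ * (x * b) * b⁻¹ := by group
    _ = b⁻¹ * (b * x) * b⁻¹ := by rw [← hb x]
    _ = x * b⁻¹ := by group
  calc a⁻¹ * (c * b⁻¹) = (c * b⁻¹) * a⁻¹ := ha' _
  _ = c * (b⁻¹ * a⁻¹) := by rw [mul_assoc]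
  _ = c * (a⁻¹ * b⁻¹) := by rw [hb' a⁻¹]
  _ = (c * a⁻¹) * b⁻¹ := by rw [mul_assoc]
  _ = b⁻¹ * (c * a⁻¹) := (hb' _).symm

/-- Let `F₁ = F ⊇ F₂ ⊇ ⋯` be the lower central series (`F_i = (⊤ : Subgroup F).lowerCentralSeries (i-1)`),
`l` an automorphism of `F`, and `G` a normal `l`-invariant subgroup.  Assume that for
each `1 ≤ i ≤ k` the polynomial `p_i(z) = (z^{m_i} − 1)^{n_i}` annihilates the map
induced by `l` on `F_i/F_{i+1}`: i.e. for `γ ∈ F_i`, applying `g ↦ l^{m_i}(g)·g⁻¹`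
`n_i` times lands in `F_{i+1}`.  Then `p = ∏_{i=1}^k p_i` annihilates the automorphism
induced by `l` on `G̃/(G̃,F̃)`, where `F̃ = F/F_{k+1}` and `G̃ = G·F_{k+1}/F_{k+1}`:
for every `γ ∈ G·F_{k+1}`, `p(l_*)γ` lies in the preimage `⁅G·F_{k+1}, F⁆·F_{k+1}`
of `(G̃,F̃)`. -/
theorem product_polynomial_annihilates {F : Type*} [Group F] (l : F ≃* F)
    (G : Subgroup F) [G.Normal] (hlG : ∀ g ∈ G, l g ∈ G)
    (k : ℕ) (hk : 0 < k) (m n : ℕ → ℕ) (hm : ∀ i, 0 < m i) (hn : ∀ i, 0 < n i)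
    (V : ℕ → F → F) (hV : ∀ i g, V i g = (l ^ (m i)) g * g⁻¹)
    (hannih : ∀ i, 1 ≤ i → i ≤ k → ∀ γ ∈ (⊤ : Subgroup F).lowerCentralSeries (i - 1),
      (V i)^[n i] γ ∈ (⊤ : Subgroup F).lowerCentralSeries i) :
    ∀ γ ∈ (G ⊔ (⊤ : Subgroup F).lowerCentralSeries k : Subgroup F),
      applyOps V n k γ ∈
        (⁅(G ⊔ (⊤ : Subgroup F).lowerCentralSeries k : Subgroup F), (⊤ : Subgroup F)⁆
          ⊔ (⊤ : Subgroup F).lowerCentralSeries k : Subgroup F) := by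
  set Hs : Subgroup F := G ⊔ (⊤ : Subgroup F).lowerCentralSeries k with hHs
  set M : Subgroup F := ⁅Hs, (⊤ : Subgroup F)⁆ ⊔ (⊤ : Subgroup F).lowerCentralSeries k with hM
  -- `l` maps `Hs` into `Hs`
  have hlHs : ∀ g ∈ Hs, l g ∈ Hs := by
    have h1 : Hs.map l.toMonoidHom ≤ Hs := by
      rw [hHs, Subgroup.map_sup]
      apply sup_le
      · refine le_trans ?_ le_sup_left
        rw [Subgroup.map_le_iff_le_comap]
        intro g hg; exact hlG g hg
      · exact le_trans (lowerCentralSeries.map l.toMonoidHom k) le_sup_right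
    intro g hg
    exact h1 (Subgroup.mem_map_of_mem _ hg)
  have hlHspow : ∀ (c : ℕ), ∀ g ∈ Hs, (l ^ c) g ∈ Hs := by
    intro c
    induction c with
    | zero => intro g hg; exact hg
    | succ c ih =>
      intro g hg
      rw [pow_succ', MulAut.mul_apply]
      exact hlHs _ (ih g hg)
  have hVHs : ∀ a, ∀ g ∈ Hs, V a g ∈ Hs := by
    intro a g hg
    rw [hV]
    exact mul_mem (hlHspow (m a) g hg) (inv_mem hg)
  -- `l` maps `M` into `M`
  have hlM : ∀ x ∈ M, l x ∈ M := by
    have h1 : M.map l.toMonoidHom ≤ M := by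
      rw [hM, Subgroup.map_sup, Subgroup.map_commutator]
      apply sup_le
      · refine le_trans ?_ le_sup_left
        apply Subgroup.commutator_mono
        · rw [Subgroup.map_le_iff_le_comap]; intro g hg; exact hlHs g hg
        · exact le_top
      · exact le_trans (lowerCentralSeries.map l.toMonoidHom k) le_sup_right
    intro x hx
    exact h1 (Subgroup.mem_map_of_mem _ hx)
  haveI : M.Normal := by rw [hM]; infer_instance
  -- the quotient
  set π : F →* F ⧸ M := QuotientGroup.mk' M with hπ
  have hπsurj : Function.Surjective π := QuotientGroup.mk'_surjective M
  -- the induced endomorphism of the quotient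
  set σ : F ⧸ M →* F ⧸ M := QuotientGroup.map M M l.toMonoidHom
    (fun x hx => hlM x hx) with hσ
  have hσπ : ∀ g : F, σ (π g) = π (l g) := fun g => rfl
  have hσiter : ∀ (c : ℕ) (g : F), (⇑σ)^[c] (π g) = π ((l ^ c) g) := by
    intro c
    induction c with
    | zero => intro g; rfl
    | succ c ih =>
      intro g
      rw [pow_succ, MulAut.mul_apply, Function.iterate_succ_apply, hσπ, ih]
  -- the operators on the quotient
  set W : ℕ → F ⧸ M → F ⧸ M := fun i q => (⇑σ)^[m i] q * q⁻¹ with hW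
  have hπV : ∀ a (g : F), π (V a g) = W a (π g) := by
    intro a g
    rw [hV, map_mul, map_inv, hW]
    simp only [hσiter (m a) g]
  have hπViter : ∀ (a c : ℕ) (g : F), π ((V a)^[c] g) = (W a)^[c] (π g) := by
    intro a c g
    have hsc : Function.Semiconj π (V a) (W a) := fun g' => hπV a g'
    exact hsc.iterate_right c g
  -- images of `Hs` are central in the quotient
  have hcentral : ∀ g ∈ Hs, ∀ q : F ⧸ M, π g * q = q * π g := by
    intro g hg q
    obtain ⟨x, rfl⟩ := hπsurj q
    open scoped commutatorElement in
    have h1 : π ⁅g, x⁆ = 1 := by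
      rw [hπ, QuotientGroup.mk'_apply, QuotientGroup.eq_one_iff]
      exact Subgroup.mem_sup_left
        (Subgroup.commutator_mem_commutator hg (Subgroup.mem_top x))
    rw [map_commutatorElement] at h1
    exact commutatorElement_eq_one_iff_mul_comm.mp h1
  -- the set of images of `Hs`
  set S : Set (F ⧸ M) := ⇑π '' ↑Hs with hS
  have hWS : ∀ a q, q ∈ S → W a q ∈ S := by
    rintro a q ⟨g, hg, rfl⟩
    exact ⟨V a g, hVHs a g hg, hπV a g⟩
  -- the operators commute on `S`
  have hcommS : ∀ a b q, q ∈ S → W a (W b q) = W b (W a q) := by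
    rintro a b q ⟨g, hg, rfl⟩
    rw [← hπV b g, ← hπV a (V b g), ← hπV a g, ← hπV b (V a g)]
    have key : ∀ (u v : ℕ), π (V u (V v g)) =
        π ((l ^ (m u)) ((l ^ (m v)) g)) *
          ((π ((l ^ (m u)) g))⁻¹ * (π g * (π ((l ^ (m v)) g))⁻¹)) := by
      intro u v
      rw [hV u, hV v]
      simp only [map_mul, map_inv, mul_inv_rev, inv_inv, mul_assoc]
    rw [key a b, key b a]
    have hD : (l ^ (m a)) ((l ^ (m b)) g) = (l ^ (m b)) ((l ^ (m a)) g) := by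
      rw [← MulAut.mul_apply, ← MulAut.mul_apply, pow_mul_comm]
    rw [hD]
    congr 1
    exact central_rearrange
      (fun x => hcentral _ (hlHspow (m a) g hg) x)
      (fun x => hcentral _ (hlHspow (m b) g hg) x)
  -- main induction: the composite of the first `i` operators lands in `F_{i+1}`
  have main : ∀ i, i ≤ k → ∀ g ∈ Hs, ∃ δ ∈ (⊤ : Subgroup F).lowerCentralSeries i,
      applyOps W n i (π g) = π δ := by
    intro i
    induction i with
    | zero =>
      intro _ g hg
      exact ⟨g, by rw [lowerCentralSeries_zero]; exact Subgroup.mem_top g, rfl⟩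
    | succ i ih =>
      intro hik g hg
      obtain ⟨δ, hδ, hδeq⟩ := ih (Nat.le_of_succ_le hik) g hg
      refine ⟨(V (i + 1))^[n (i + 1)] δ,
        hannih (i + 1) (Nat.succ_le_succ (Nat.zero_le i)) hik δ (by simpa using hδ), ?_⟩
      calc applyOps W n (i + 1) (π g)
          = applyOps W n i ((W (i + 1))^[n (i + 1)] (π g)) := rfl
        _ = (W (i + 1))^[n (i + 1)] (applyOps W n i (π g)) :=
            applyOps_comm W S hWS hcommS n i (π g) ⟨g, hg, rfl⟩ (i + 1) (n (i + 1))
        _ = (W (i + 1))^[n (i + 1)] (π δ) := by rw [hδeq]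
        _ = π ((V (i + 1))^[n (i + 1)] δ) := (hπViter (i + 1) (n (i + 1)) δ).symm
  -- conclude
  intro γ hγ
  obtain ⟨δ, hδ, hδeq⟩ := main k le_rfl γ hγ
  have h1 : π (applyOps V n k γ) = π δ := by
    rw [applyOps_semiconj π V W n hπV k γ, hδeq]
  have h2 : π δ = 1 := by
    rw [hπ, QuotientGroup.mk'_apply, QuotientGroup.eq_one_iff]
    exact Subgroup.mem_sup_right hδ
  have h3 : π (applyOps V n k γ) = 1 := h1.trans h2
  rw [hπ, QuotientGroup.mk'_apply, QuotientGroup.eq_one_iff] at h3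
  exact h3
end
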